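/- arXiv:2202.07069 — 2 statements merged into one kernel-verified Lean document; each statement's English description precedes it below -/
import Mathlib

section
/- Let V be a commutative unital quantale, F : Type u ⥤ Type u a functor, E a lax extension of F to V-Rel, κ : Type u, and 𝔯 : F.obj κ → V. For each type X and each p : X → κ → V, define λ_X p : F.obj X → V by λ_X p 𝔵 = ⨆_{t ∈ F.obj κ} (𝔯 t ⊗ E p♭ t 𝔵), where p♭ : κ → X → V is the transpose p♭ i x = p x i (so E p♭ : F.obj κ → F.obj X → V). Then λ is compatible with the lifting induced by E: for every V-category (X,a) and every V-functor f : (X,a) → V^κ, E a 𝔵 𝔶 ≤ hom (λ_X f 𝔵) (λ_X f 𝔶) for all 𝔵,𝔶 ∈ F.obj X. (Every predicate lifting induced by a lax extension is compatible with the lifting induced by that lax extension.) -/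
universe u v w

open CategoryTheory

/-- `V` is a (commutative unital) quantale: the tensor distributes over suprema. -/
def QuantaleLaw (V : Type u) [CompleteLattice V] [CommMonoid V] : Prop :=
  ∀ (u : V) (s : Set V), u * sSup s = ⨆ v ∈ s, u * v

/-- Internal hom of the quantale: `hom u w = ⨆ {v | u ⊗ v ≤ w}`. -/
def qhom {V : Type u} [CompleteLattice V] [CommMonoid V] (u w : V) : V :=
  sSup {v | u * v ≤ w}

/-- `a` is a `V`-category structure on `X`. -/
def IsVCat {V : Type u} [CompleteLattice V] [CommMonoid V] {X : Type v}
    (a : X → X → V) : Prop :=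
  (∀ x, (1 : V) ≤ a x x) ∧ ∀ x y z, a x y * a y z ≤ a x z

/-- `f` is a `V`-functor from `(X,a)` to `(Y,b)`. -/
def IsVFunctor {V : Type u} [CompleteLattice V] {X : Type v} {Y : Type w}
    (a : X → X → V) (b : Y → Y → V) (f : X → Y) : Prop :=
  ∀ x y, a x y ≤ b (f x) (f y)

/-- `f` is an initial `V`-functor from `(X,a)` to `(Y,b)`. -/
def IsInitialVFunctor {V : Type u} {X : Type v} {Y : Type w}
    (a : X → X → V) (b : Y → Y → V) (f : X → Y) : Prop :=
  ∀ x y, a x y = b (f x) (f y)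

/-- The `V`-category structure of the power `V^κ`. -/
def powStr {V : Type u} [CompleteLattice V] [CommMonoid V] (κ : Type v)
    (p q : κ → V) : V :=
  ⨅ i, qhom (p i) (q i)

/-- The graph of a function, as a `V`-relation: `k` on the graph, `⊥` elsewhere. -/
def fnGraph {V : Type u} [CompleteLattice V] [CommMonoid V] {X : Type v} {Y : Type w}
    (f : X → Y) : X → Y → V :=
  fun x y => ⨆ _ : f x = y, (1 : V)

/-- A lifting of a `Set`-functor `F` to `V`-Cat. -/
structure Lifting (V : Type u) [CompleteLattice V] [CommMonoid V]
    (F : Type u ⥤ Type u) where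
  str : ∀ {X : Type u}, (X → X → V) → F.obj X → F.obj X → V
  isVCat : ∀ {X : Type u} (a : X → X → V), IsVCat a → IsVCat (str a)
  map : ∀ {X Y : Type u} (a : X → X → V) (b : Y → Y → V) (f : X → Y),
    IsVCat a → IsVCat b → IsVFunctor a b f →
    IsVFunctor (str a) (str b) (F.map (TypeCat.ofHom f))

/-- A `κ`-ary `V`-valued predicate lifting for a `Set`-functor `F`. -/
structure PredLifting (V : Type u) [CompleteLattice V] [CommMonoid V]
    (F : Type u ⥤ Type u) (κ : Type u) where
  app : ∀ {X : Type u}, (X → κ → V) → F.obj X → V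
  natural : ∀ {X Y : Type u} (f : X → Y) (p : Y → κ → V) (t : F.obj X),
    app (fun x => p (f x)) t = app p (F.map (TypeCat.ofHom f) t)

/-- A predicate lifting is monotone if it preserves the pointwise order of predicates. -/
def PredLifting.Mono {V : Type u} [CompleteLattice V] [CommMonoid V]
    {F : Type u ⥤ Type u} {κ : Type u} (lam : PredLifting V F κ) : Prop :=
  ∀ (X : Type u) (p q : X → κ → V), (∀ x i, p x i ≤ q x i) →
    ∀ t, lam.app p t ≤ lam.app q t

/-- A predicate lifting is compatible with a lifting `L` if it lifts `V`-functorial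
predicates to `V`-functorial predicates. -/
def Compatible {V : Type u} [CompleteLattice V] [CommMonoid V] {F : Type u ⥤ Type u}
    (L : Lifting V F) {κ : Type u} (lam : PredLifting V F κ) : Prop :=
  ∀ (X : Type u) (a : X → X → V), IsVCat a → ∀ f : X → κ → V,
    IsVFunctor a (powStr κ) f → IsVFunctor (L.str a) qhom (lam.app f)

/-- The Kantorovich `V`-category structure on `F.obj X` induced by a family of
predicate liftings. -/
noncomputable def kantStr {V : Type u} [CompleteLattice V] [CommMonoid V]
    {F : Type u ⥤ Type u} {ι : Type v} {κ : ι → Type u}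
    (Λ : ∀ l, PredLifting V F (κ l)) {X : Type u} (a : X → X → V)
    (t s : F.obj X) : V :=
  ⨅ l, ⨅ f : {f : X → κ l → V // IsVFunctor a (powStr (κ l)) f},
    qhom ((Λ l).app f.1 t) ((Λ l).app f.1 s)

/-- A generalized predicate lifting for `(F, L)` with parameter `V`-category `(A, α)`. -/
structure GenPredLifting (V : Type u) [CompleteLattice V] [CommMonoid V]
    (F : Type u ⥤ Type u) (L : Lifting V F) (A : Type u) (α : A → A → V) where
  app : ∀ {Z : Type u}, (Z → Z → V) → (Z → A) → F.obj Z → V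
  isVFunctor : ∀ {Z : Type u} (c : Z → Z → V), IsVCat c → ∀ f : Z → A,
    IsVFunctor c α f → IsVFunctor (L.str c) qhom (app c f)
  natural : ∀ {Z Z' : Type u} (c : Z → Z → V) (c' : Z' → Z' → V),
    IsVCat c → IsVCat c' → ∀ (u : Z → Z'), IsVFunctor c c' u →
    ∀ (g : Z' → A), IsVFunctor c' α g →
    ∀ t : F.obj Z, app c (fun z => g (u z)) t = app c' g (F.map (TypeCat.ofHom u) t)

/-- A lax extension of a `Set`-functor `F` to `V`-Rel. -/
structure LaxExt (V : Type u) [CompleteLattice V] [CommMonoid V]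
    (F : Type u ⥤ Type u) where
  ext : ∀ {X Y : Type u}, (X → Y → V) → F.obj X → F.obj Y → V
  mono : ∀ {X Y : Type u} (r r' : X → Y → V), (∀ x y, r x y ≤ r' x y) →
    ∀ t s, ext r t s ≤ ext r' t s
  comp : ∀ {X Y Z : Type u} (r : X → Y → V) (s : Y → Z → V)
    (t : F.obj X) (w : F.obj Z),
    (⨆ u : F.obj Y, ext r t u * ext s u w) ≤
      ext (fun x z => ⨆ y, r x y * s y z) t w
  lax_map : ∀ {X Y : Type u} (f : X → Y) (t : F.obj X),
    (1 : V) ≤ ext (fnGraph f) t (F.map (TypeCat.ofHom f) t)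
  lax_map_op : ∀ {X Y : Type u} (f : X → Y) (t : F.obj X),
    (1 : V) ≤ ext (fun y x => fnGraph f x y) (F.map (TypeCat.ofHom f) t) t

/-!
Since `f : (X, a) → V^κ` is a `V`-functor, `f y i ⊗ a y z ≤ f y i ⊗ hom (f y i, f z i) ≤ f z i`,
i.e. `fᵀ · a ≤ fᵀ`. By (L2) and (L1) this gives `E fᵀ w t ⊗ E a t s ≤ E fᵀ w s`; multiplying by
`𝔯 w` and taking suprema over `w`, the claim follows from the adjunction
`u ⊗ v ≤ w ↔ v ≤ hom (u, w)`.
-/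

namespace QuantaleLaw

variable {V : Type u} [CompleteLattice V] [CommMonoid V] (hV : QuantaleLaw V)
include hV

theorem mul_iSup {ι : Sort*} (x : V) (g : ι → V) : x * (⨆ i, g i) = ⨆ i, x * g i := by
  rw [iSup, hV x (Set.range g), iSup_range]

theorem mul_le_mul_left {x y : V} (h : x ≤ y) (z : V) : z * x ≤ z * y :=
  calc z * x ≤ ⨆ v ∈ ({x, y} : Set V), z * v := le_iSup₂_of_le x (Set.mem_insert x _) le_rfl
    _ = z * y := by rw [← hV, sSup_pair, sup_eq_right.mpr h]

theorem mul_qhom_le (x y : V) : x * qhom x y ≤ y := by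
  rw [qhom, hV]
  exact iSup₂_le fun _ hv => hv

end QuantaleLaw

theorem le_qhom_of_mul_le {V : Type u} [CompleteLattice V] [CommMonoid V] {x y z : V}
    (h : x * z ≤ y) : z ≤ qhom x y :=
  le_sSup h

theorem IsVFunctor.iSup_mul_le_of_powStr {V : Type u} [CompleteLattice V] [CommMonoid V]
    (hV : QuantaleLaw V) {κ X : Type*} {a : X → X → V} {f : X → κ → V}
    (hf : IsVFunctor a (powStr κ) f) (i : κ) (z : X) :
    ⨆ y, f y i * a y z ≤ f z i :=
  iSup_le fun y =>
    calc f y i * a y z ≤ f y i * qhom (f y i) (f z i) :=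
          hV.mul_le_mul_left ((hf y z).trans (iInf_le _ i)) _
      _ ≤ f z i := hV.mul_qhom_le _ _

theorem LaxExt.ext_transpose_mul_ext_le {V : Type u} [CompleteLattice V] [CommMonoid V]
    (hV : QuantaleLaw V) {F : Type u ⥤ Type u} (E : LaxExt V F) {κ X : Type u}
    {a : X → X → V} {f : X → κ → V} (hf : IsVFunctor a (powStr κ) f)
    (w : F.obj κ) (t s : F.obj X) :
    E.ext (fun i z => f z i) w t * E.ext a t s ≤ E.ext (fun i z => f z i) w s :=
  calc E.ext (fun i z => f z i) w t * E.ext a t s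
      ≤ ⨆ u, E.ext (fun i z => f z i) w u * E.ext a u s :=
        le_iSup (fun u => E.ext (fun i z => f z i) w u * E.ext a u s) t
    _ ≤ E.ext (fun i z => ⨆ y, f y i * a y z) w s := E.comp _ _ _ _
    _ ≤ E.ext (fun i z => f z i) w s := E.mono _ _ (hf.iSup_mul_le_of_powStr hV) _ _

theorem stmt_16_general {V : Type u} [CompleteLattice V] [CommMonoid V] (hV : QuantaleLaw V)
    {F : Type u ⥤ Type u} (E : LaxExt V F) (κ : Type u) (𝔯 : F.obj κ → V)
    {X : Type u} (a : X → X → V)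
    (f : X → κ → V) (hf : IsVFunctor a (powStr κ) f) (t s : F.obj X) :
    E.ext a t s ≤
      qhom (⨆ w : F.obj κ, 𝔯 w * E.ext (fun i z => f z i) w t)
           (⨆ w : F.obj κ, 𝔯 w * E.ext (fun i z => f z i) w s) := by
  refine le_qhom_of_mul_le ?_
  rw [mul_comm, hV.mul_iSup]
  refine iSup_mono fun w => ?_
  calc E.ext a t s * (𝔯 w * E.ext (fun i z => f z i) w t)
      = 𝔯 w * (E.ext (fun i z => f z i) w t * E.ext a t s) := by
        rw [mul_comm (E.ext a t s), mul_assoc]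
    _ ≤ 𝔯 w * E.ext (fun i z => f z i) w s :=
        hV.mul_le_mul_left (E.ext_transpose_mul_ext_le hV hf w t s) _

/-- every predicate lifting induced by a lax extension (via `𝔯` and the
extension of the transpose) is compatible with the lifting induced by the lax
extension. -/
theorem stmt_16 {V : Type u} [CompleteLattice V] [CommMonoid V] (hV : QuantaleLaw V)
    {F : Type u ⥤ Type u} (E : LaxExt V F) (κ : Type u) (𝔯 : F.obj κ → V)
    {X : Type u} (a : X → X → V) (ha : IsVCat a)
    (f : X → κ → V) (hf : IsVFunctor a (powStr κ) f) (t s : F.obj X) :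
    E.ext a t s ≤
      qhom (⨆ w : F.obj κ, 𝔯 w * E.ext (fun i z => f z i) w t)
           (⨆ w : F.obj κ, 𝔯 w * E.ext (fun i z => f z i) w s) :=
  stmt_16_general hV E κ 𝔯 a f hf t s
end

section
/- Let V be a commutative unital quantale, F : Type u ⥤ Type u a functor, and L a lifting of F to V-Cat that preserves initial morphisms and corestricts to symmetric V-categories, i.e. L c is symmetric for every V-category (Z,c). Let (X,a) be a V-category and α : X → F.obj X an L-coalgebra, i.e. a x y ≤ L a (α x) (α y) for all x,y. Define the behavioural distance bd(x,y) = ⨆ { b (f x) (f y) | Y : Type u, b a V-category structure on Y, β : Y → F.obj Y with b y y' ≤ L b (β y) (β y') for all y,y', and f : X → Y a V-functor (X,a) → (Y,b) with β ∘ f = F.map f ∘ α }. Then bd is symmetric: bd(x,y) = bd(y,x) for all x,y ∈ X. -/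
universe u v w

open CategoryTheory

/-!
Re-metrize a coalgebra `(Y, b, β)` by `b' y y' = L b (β y) (β y')`. Since `β` is a `V`-functor,
`b ≤ b'`, so `β` is still a coalgebra for `b'` and every coalgebra morphism out of `(X, a, α)`
stays one. As `L` corestricts to symmetric `V`-categories, `b'` is symmetric, hence
`b (f x) (f y) ≤ b' (f y) (f x) ≤ bd y x`.
-/

theorem IsVCat.comap {V : Type u} [CompleteLattice V] [CommMonoid V] {X : Type v} {Y : Type w}
    {b : Y → Y → V} (hb : IsVCat b) (f : X → Y) : IsVCat fun x x' => b (f x) (f x') :=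
  ⟨fun x => hb.1 (f x), fun x y z => hb.2 (f x) (f y) (f z)⟩

namespace Lifting

variable {V : Type u} [CompleteLattice V] [CommMonoid V] {F : Type u ⥤ Type u} (L : Lifting V F)

theorem str_mono {X : Type u} {c d : X → X → V} (hc : IsVCat c) (hd : IsVCat d)
    (hcd : ∀ x y, c x y ≤ d x y) (t s : F.obj X) : L.str c t s ≤ L.str d t s := by
  have hid : ∀ t : F.obj X, F.map (TypeCat.ofHom (id : X → X)) t = t :=
    F.map_id_apply X
  simpa only [hid] using L.map c d id hc hd hcd t s

theorem isVFunctor_comap_str {Y : Type u} {b : Y → Y → V} (hb : IsVCat b) {β : Y → F.obj Y}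
    (hβ : IsVFunctor b (L.str b) β) :
    IsVFunctor (fun y y' => L.str b (β y) (β y'))
      (L.str fun y y' => L.str b (β y) (β y')) β :=
  fun y y' => L.str_mono hb ((L.isVCat b hb).comap β) hβ (β y) (β y')

end Lifting

theorem stmt_19_general {V : Type u} [CompleteLattice V] [CommMonoid V]
    {F : Type u ⥤ Type u} (L : Lifting V F)
    (hsymL : ∀ (Z : Type u) (c : Z → Z → V), IsVCat c →
      ∀ t s : F.obj Z, L.str c t s = L.str c s t)
    {X : Type u} (a : X → X → V)
    (α : X → F.obj X)
    (bd : X → X → V)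
    (hbd : ∀ x y : X, bd x y = sSup { v : V |
      ∃ (Y : Type u) (b : Y → Y → V) (β : Y → F.obj Y) (f : X → Y),
        IsVCat b ∧ IsVFunctor b (L.str b) β ∧ IsVFunctor a b f ∧
        (∀ z, β (f z) = F.map (TypeCat.ofHom f) (α z)) ∧ v = b (f x) (f y) }) :
    ∀ x y, bd x y = bd y x := by
  have bd_le_swap : ∀ x y, bd x y ≤ bd y x := by
    intro x y
    rw [hbd, hbd]
    refine sSup_le ?_
    rintro _ ⟨Y, b, β, f, hb, hβ, hf, hcomm, rfl⟩
    let b' : Y → Y → V := fun y y' => L.str b (β y) (β y')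
    have hf' : IsVFunctor a b' f := fun x y => (hf x y).trans (hβ _ _)
    calc b (f x) (f y) ≤ b' (f x) (f y) := hβ _ _
      _ = b' (f y) (f x) := hsymL Y b hb _ _
      _ ≤ _ := by
        apply le_sSup
        exact ⟨Y, b', β, f, (L.isVCat b hb).comap β, L.isVFunctor_comap_str hb hβ, hf', hcomm, rfl⟩
  exact fun x y => le_antisymm (bd_le_swap x y) (bd_le_swap y x)

/-- for a lifting preserving initial morphisms that corestricts to
symmetric `V`-categories, behavioural distance on any coalgebra is symmetric. -/
theorem stmt_19 {V : Type u} [CompleteLattice V] [CommMonoid V] (hV : QuantaleLaw V)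
    {F : Type u ⥤ Type u} (L : Lifting V F)
    (hpres : ∀ {X Y : Type u} (a : X → X → V) (b : Y → Y → V) (f : X → Y),
      IsVCat a → IsVCat b → IsInitialVFunctor a b f →
      IsInitialVFunctor (L.str a) (L.str b) (F.map (TypeCat.ofHom f)))
    (hsymL : ∀ (Z : Type u) (c : Z → Z → V), IsVCat c →
      ∀ t s : F.obj Z, L.str c t s = L.str c s t)
    {X : Type u} (a : X → X → V) (ha : IsVCat a)
    (α : X → F.obj X) (hα : IsVFunctor a (L.str a) α)
    (bd : X → X → V)
    (hbd : ∀ x y : X, bd x y = sSup { v : V |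
      ∃ (Y : Type u) (b : Y → Y → V) (β : Y → F.obj Y) (f : X → Y),
        IsVCat b ∧ IsVFunctor b (L.str b) β ∧ IsVFunctor a b f ∧
        (∀ z, β (f z) = F.map (TypeCat.ofHom f) (α z)) ∧ v = b (f x) (f y) }) :
    ∀ x y, bd x y = bd y x :=
  stmt_19_general L hsymL a α bd hbd
end
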